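/- Let (u_k) be iterates of the iteratively regularized Landweber iteration with exact data, i.e. u_{k+1} = u_k − F'(u_k)*(F(u_k) − y) − λ_k·Â'(u_k)*(Â(u_k) − y) with y = F(u†). Suppose for every k ∈ ℕ: u_k ∈ B_ρ(u†), the tangential cone condition with constant ν holds at u_k, ‖F'(u_k)‖ ≤ L_F, ‖Â'(u_k)‖ ≤ L_Â, ‖Â(u_k) − y‖ ≤ C_Â^0, λ_k·L_Â·C_Â^0 ≤ ρ and λ_k ≤ C_λ^0·‖F(u_k) − y‖², and that C := 1 − ν − L_F² − 2·L_Â·C_Â^0·C_λ^0·ρ > 0. Then the series Σ_{k=0}^{∞} ‖F(u_k) − y‖² converges and Σ_{k=0}^{∞} ‖F(u_k) − y‖² ≤ ‖u_0 − u†‖² / (2C); in particular ‖F(u_k) − y‖ → 0 as k → ∞. -/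

import Mathlib

/-!
The error `‖u_k - u†‖²` is a Lyapunov function: expanding the square of
`u_{k+1} - u† = (u_k - u†) - F'(u_k)*(F(u_k) - y) - λ_k Â'(u_k)*(Â(u_k) - y)`, the tangential
cone condition makes the Landweber part decrease it by at least `(2 - 2ν - L_F²)‖F(u_k) - y‖²`,
while the regularization part costs at most `2 λ_k L_Â C_Â⁰ ρ ≤ 2 C_λ⁰ L_Â C_Â⁰ ρ ‖F(u_k) - y‖²`
because `u_{k+1}` stays in the ball. Telescoping bounds the partial sums of the squared residuals.
-/

open scoped RealInnerProductSpace

section Landweber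

variable {X Y : Type*} [NormedAddCommGroup X] [InnerProductSpace ℝ X] [CompleteSpace X]
  [NormedAddCommGroup Y] [InnerProductSpace ℝ Y] [CompleteSpace Y]

lemma norm_adjoint_apply_le (T : X →L[ℝ] Y) (r : Y) :
    ‖ContinuousLinearMap.adjoint T r‖ ≤ ‖T‖ * ‖r‖ := by
  simpa only [LinearIsometryEquiv.norm_map] using (ContinuousLinearMap.adjoint T).le_opNorm r

omit [CompleteSpace Y] in
lemma one_sub_mul_norm_sq_le_inner_of_norm_sub_le {r d : Y} {ν : ℝ}
    (h : ‖r - d‖ ≤ ν * ‖r‖) : (1 - ν) * ‖r‖ ^ 2 ≤ ⟪r, d⟫ := by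
  have hcs : ⟪r, r - d⟫ ≤ ‖r‖ * ‖r - d‖ := real_inner_le_norm _ _
  rw [inner_sub_right, real_inner_self_eq_norm_sq] at hcs
  nlinarith [norm_nonneg r]

lemma mul_norm_sq_le_norm_sq_sub_norm_sq_of_step (T S : X →L[ℝ] Y) {e e' : X} {r a : Y}
    {l ν LF LA CA Clam ρ : ℝ}
    (hstep : e' = e - ContinuousLinearMap.adjoint T r - l • ContinuousLinearMap.adjoint S a)
    (htcc : (1 - ν) * ‖r‖ ^ 2 ≤ ⟪r, T e⟫) (hT : ‖T‖ ≤ LF) (hS : ‖S‖ ≤ LA) (ha : ‖a‖ ≤ CA)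
    (he' : ‖e'‖ ≤ ρ) (hl0 : 0 ≤ l) (hl : l ≤ Clam * ‖r‖ ^ 2) :
    (2 - 2 * ν - LF ^ 2 - 2 * LA * CA * Clam * ρ) * ‖r‖ ^ 2 ≤ ‖e‖ ^ 2 - ‖e'‖ ^ 2 := by
  set s := ContinuousLinearMap.adjoint T r
  set t := ContinuousLinearMap.adjoint S a
  have hLF : 0 ≤ LF := (norm_nonneg T).trans hT
  have hLA : 0 ≤ LA := (norm_nonneg S).trans hS
  have hs : ‖s‖ ≤ LF * ‖r‖ := (norm_adjoint_apply_le T r).trans (by gcongr)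
  have ht : ‖t‖ ≤ LA * CA := (norm_adjoint_apply_le S a).trans (by gcongr)
  have hexpand : ‖e'‖ ^ 2 = ‖e‖ ^ 2 - 2 * ⟪r, T e⟫ + ‖s‖ ^ 2 - 2 * l * ⟪e', t⟫ - l ^ 2 * ‖t‖ ^ 2 := by
    have h1 : ‖e - s‖ ^ 2 = ‖e‖ ^ 2 - 2 * ⟪r, T e⟫ + ‖s‖ ^ 2 := by
      rw [norm_sub_sq_real, real_inner_comm, ContinuousLinearMap.adjoint_inner_left]
    have h2 : ‖e - s‖ ^ 2 = ‖e'‖ ^ 2 + 2 * l * ⟪e', t⟫ + l ^ 2 * ‖t‖ ^ 2 := by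
      rw [show e - s = e' + l • t by rw [hstep]; abel, norm_add_sq_real, real_inner_smul_right,
        norm_smul, mul_pow, Real.norm_eq_abs, sq_abs]
      ring
    linarith
  have hcross : -(LA * CA * ρ) ≤ ⟪e', t⟫ := by
    have := (abs_real_inner_le_norm e' t).trans
      (mul_le_mul he' ht (norm_nonneg t) ((norm_nonneg e').trans he'))
    linarith [neg_abs_le ⟪e', t⟫]
  have hs2 : ‖s‖ ^ 2 ≤ LF ^ 2 * ‖r‖ ^ 2 := by
    nlinarith [mul_le_mul hs hs (norm_nonneg s) (by positivity)]
  have hCA : 0 ≤ CA := (norm_nonneg a).trans ha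
  have hρ : 0 ≤ ρ := (norm_nonneg e').trans he'
  have hlcross : -(Clam * ‖r‖ ^ 2 * (LA * CA * ρ)) ≤ l * ⟪e', t⟫ := by
    nlinarith [mul_le_mul_of_nonneg_left hcross hl0,
      mul_le_mul_of_nonneg_right hl (by positivity : 0 ≤ LA * CA * ρ)]
  nlinarith [mul_nonneg (sq_nonneg l) (sq_nonneg ‖t‖)]

end Landweber

lemma summable_and_tsum_le_of_mul_le_sub {f V : ℕ → ℝ} {c : ℝ} (hc : 0 < c)
    (hf : ∀ k, 0 ≤ f k) (hV : ∀ k, 0 ≤ V k) (h : ∀ k, c * f k ≤ V k - V (k + 1)) :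
    Summable f ∧ ∑' k, f k ≤ V 0 / c := by
  have hpartial : ∀ n, ∑ k ∈ Finset.range n, f k ≤ V 0 / c := fun n => by
    rw [le_div_iff₀ hc, Finset.sum_mul]
    calc ∑ k ∈ Finset.range n, f k * c ≤ ∑ k ∈ Finset.range n, (V k - V (k + 1)) :=
          Finset.sum_le_sum fun k _ => by linarith [h k]
      _ = V 0 - V n := Finset.sum_range_sub' V n
      _ ≤ V 0 := sub_le_self _ (hV n)
  have hsum := summable_of_sum_range_le hf hpartial
  exact ⟨hsum, hsum.tsum_le_of_sum_range_le hpartial⟩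

lemma tendsto_norm_zero_of_summable_norm_sq {E : Type*} [SeminormedAddCommGroup E] {x : ℕ → E}
    (h : Summable fun k => ‖x k‖ ^ 2) : Filter.Tendsto (fun k => ‖x k‖) Filter.atTop (nhds 0) := by
  simpa only [Real.sqrt_sq (norm_nonneg _), Real.sqrt_zero] using h.tendsto_atTop_zero.sqrt

theorem stmt6_general
    {X Y : Type*}
    [NormedAddCommGroup X] [InnerProductSpace ℝ X] [CompleteSpace X]
    [NormedAddCommGroup Y] [InnerProductSpace ℝ Y] [CompleteSpace Y]
    (F A : X → Y) (udag : X) (y : Y) (ρ LF LA ν CA Clam : ℝ)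
    (u : ℕ → X) (lam : ℕ → ℝ)
    (F' A' : X → X →L[ℝ] Y)
    (hy : y = F udag) (hρ : 0 < ρ)
    (hCA : 0 < CA) (hClam : 0 < Clam)
    (hiter : ∀ k : ℕ,
      u (k + 1) = u k - ContinuousLinearMap.adjoint (F' (u k)) (F (u k) - y)
        - lam k • ContinuousLinearMap.adjoint (A' (u k)) (A (u k) - y))
    (hball : ∀ k, u k ∈ Metric.closedBall udag ρ)
    (hLF : ∀ k, ‖F' (u k)‖ ≤ LF)
    (hLA : ∀ k, ‖A' (u k)‖ ≤ LA)
    (htcc : ∀ k,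
      ‖F (u k) - F udag - (F' (u k)) (u k - udag)‖ ≤ ν * ‖F (u k) - F udag‖)
    (hAres : ∀ k, ‖A (u k) - y‖ ≤ CA)
    (hlam0 : ∀ k, 0 ≤ lam k)
    (hlam2 : ∀ k, lam k ≤ Clam * ‖F (u k) - y‖ ^ 2)
    (hpos : 0 < 1 - ν - LF ^ 2 - 2 * LA * CA * Clam * ρ) :
    Summable (fun k => ‖F (u k) - y‖ ^ 2) ∧
      (∑' k : ℕ, ‖F (u k) - y‖ ^ 2)
        ≤ ‖u 0 - udag‖ ^ 2 / (2 * (1 - ν - LF ^ 2 - 2 * LA * CA * Clam * ρ)) ∧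
      Filter.Tendsto (fun k => ‖F (u k) - y‖) Filter.atTop (nhds 0) := by
  subst hy
  have hLA0 : 0 ≤ LA := (norm_nonneg _).trans (hLA 0)
  have hdecrease : ∀ k, 2 * (1 - ν - LF ^ 2 - 2 * LA * CA * Clam * ρ) * ‖F (u k) - F udag‖ ^ 2
      ≤ ‖u k - udag‖ ^ 2 - ‖u (k + 1) - udag‖ ^ 2 := fun k => by
    refine le_trans ?_ (mul_norm_sq_le_norm_sq_sub_norm_sq_of_step (F' (u k)) (A' (u k))
      (by rw [hiter k]; abel)
      (one_sub_mul_norm_sq_le_inner_of_norm_sub_le (by simpa only [sub_sub] using htcc k))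
      (hLF k) (hLA k) (hAres k) (mem_closedBall_iff_norm.mp (hball (k + 1))) (hlam0 k) (hlam2 k))
    gcongr
    nlinarith [sq_nonneg LF, (by positivity : 0 ≤ LA * CA * Clam * ρ)]
  obtain ⟨hsum, htsum⟩ := summable_and_tsum_le_of_mul_le_sub (by linarith) (fun k => sq_nonneg _)
    (fun k => sq_nonneg _) hdecrease
  exact ⟨hsum, htsum, tendsto_norm_zero_of_summable_norm_sq hsum⟩

/-- Noise-free residual summability: for the iteratively regularized Landweber iteration with
exact data `y = F(u†)`, under the stated conditions with
`C := 1 − ν − L_F² − 2·L_Â·C_Â⁰·C_λ⁰·ρ > 0`, the series `Σ_k ‖F(u_k) − y‖²` converges, is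
bounded by `‖u_0 − u†‖²/(2C)`, and in particular `‖F(u_k) − y‖ → 0`. -/
theorem stmt6
    {X Y : Type*}
    [NormedAddCommGroup X] [InnerProductSpace ℝ X] [CompleteSpace X]
    [NormedAddCommGroup Y] [InnerProductSpace ℝ Y] [CompleteSpace Y]
    (F A : X → Y) (udag : X) (y : Y) (ρ LF LA ν CA Clam : ℝ)
    (u : ℕ → X) (lam : ℕ → ℝ)
    (F' A' : X → X →L[ℝ] Y)
    (hy : y = F udag) (hρ : 0 < ρ) (hν : 0 < ν)
    (hCA : 0 < CA) (hClam : 0 < Clam)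
    (hiter : ∀ k : ℕ,
      u (k + 1) = u k - ContinuousLinearMap.adjoint (F' (u k)) (F (u k) - y)
        - lam k • ContinuousLinearMap.adjoint (A' (u k)) (A (u k) - y))
    (hball : ∀ k, u k ∈ Metric.closedBall udag ρ)
    (hdF : ∀ k, HasFDerivAt F (F' (u k)) (u k))
    (hdA : ∀ k, HasFDerivAt A (A' (u k)) (u k))
    (hLF : ∀ k, ‖F' (u k)‖ ≤ LF)
    (hLA : ∀ k, ‖A' (u k)‖ ≤ LA)
    (htcc : ∀ k,
      ‖F (u k) - F udag - (F' (u k)) (u k - udag)‖ ≤ ν * ‖F (u k) - F udag‖)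
    (hAres : ∀ k, ‖A (u k) - y‖ ≤ CA)
    (hlam0 : ∀ k, 0 ≤ lam k)
    (hlam1 : ∀ k, lam k * LA * CA ≤ ρ)
    (hlam2 : ∀ k, lam k ≤ Clam * ‖F (u k) - y‖ ^ 2)
    (hpos : 0 < 1 - ν - LF ^ 2 - 2 * LA * CA * Clam * ρ) :
    Summable (fun k => ‖F (u k) - y‖ ^ 2) ∧
      (∑' k : ℕ, ‖F (u k) - y‖ ^ 2)
        ≤ ‖u 0 - udag‖ ^ 2 / (2 * (1 - ν - LF ^ 2 - 2 * LA * CA * Clam * ρ)) ∧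
      Filter.Tendsto (fun k => ‖F (u k) - y‖) Filter.atTop (nhds 0) :=
  stmt6_general F A udag y ρ LF LA ν CA Clam u lam F' A' hy hρ hCA hClam hiter hball hLF hLA htcc
    hAres hlam0 hlam2 hpos
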